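/- Suppose in addition that Ĥ : Θ × 𝒵 → ℝ^d is measurable with sup_{θ∈Θ} |Ĥ_θ|_W < ∞, satisfies the Poisson equation Ĥ_θ(z) − (Π_θ Ĥ_θ)(z) = H_θ(z) − h̄(θ) for all (θ, z), and satisfies the Lipschitz bound sup_z ‖(Π_θ Ĥ_θ)(z) − (Π_{θ'} Ĥ_{θ'})(z)‖ / W(z) ≤ C_P ‖θ − θ'‖ for all θ, θ' ∈ Θ; suppose also ‖h̄(θ)‖ ≤ C₀ for all θ ∈ Θ. Define R'_k = (Π_{θ_{k+1}} Ĥ_{θ_{k+1}})(Z^{k+1}) − (Π_{θ_k} Ĥ_{θ_k})(Z^{k+1}). Then 𝔼[∑_{k≥0} γ_k |⟨h̄(θ_k), P(θ_k) R'_k⟩|] < ∞; in particular the series ∑_{k≥0} γ_k ⟨h̄(θ_k), P(θ_k) R'_k⟩ converges absolutely almost surely. (Control of the R'_k part in the proof of Lemma 3.) -/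

import Mathlib

/-!
Both terms of `R'_k` are evaluated at the same point `Z^{k+1}`, so
the Lipschitz bound for `θ ↦ Π_θ Ĥ_θ` together with `‖θ_{k+1} - θ_k‖ ≤ γ_k μ_M |H|_W W(Z^{k+1})`
makes the `k`-th term `O(γ_k² W(Z^{k+1})²)`. Since `W² ≤ W^p`, the drift condition transported
through the conditional law of `Z^{k+1}` bounds `𝔼[W(Z^k)²]` uniformly in `k`, and `∑ γ_k² < ∞`
finishes the argument.
-/

open MeasureTheory ProbabilityTheory
open scoped RealInnerProductSpace ENNReal

lemma ContinuousLinearMap.norm_le_of_inner_self_le {E : Type*} [NormedAddCommGroup E]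
    [InnerProductSpace ℝ E] [CompleteSpace E] {T : E →L[ℝ] E} (hT : IsSelfAdjoint T)
    {c : ℝ} (hc : 0 ≤ c) (h0 : ∀ v, 0 ≤ ⟪v, T v⟫) (h : ∀ v, ⟪v, T v⟫ ≤ c * ‖v‖ ^ 2) :
    ‖T‖ ≤ c := by
  rw [T.norm_eq_iSup_rayleighQuotient hT.isSymmetric]
  refine ciSup_le fun v => ?_
  rcases eq_or_ne v 0 with rfl | hv
  · simpa using hc
  have hv2 : 0 < ‖v‖ ^ 2 := by positivity
  rw [rayleighQuotient, reApplyInnerSelf_apply, RCLike.re_to_real, real_inner_comm, abs_div,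
    abs_of_pos hv2, div_le_iff₀ hv2, abs_of_nonneg (h0 v)]
  exact h v

section ConditionalLaw

variable {Ω α : Type*} {m m0 : MeasurableSpace Ω} [MeasurableSpace α] {μ : Measure Ω}
  {κ : Ω → Measure α}

lemma measure_preimage_eq_lintegral_of_condExp_indicator [IsFiniteMeasure μ] (hm : m ≤ m0)
    {X : Ω → α} (hX : Measurable X) {s : Set α} (hs : MeasurableSet s)
    (hκ : ∀ ω, κ ω s ≠ ∞)
    (h : μ[fun ω => s.indicator (fun _ => (1 : ℝ)) (X ω) | m] =ᵐ[μ] fun ω => (κ ω s).toReal) :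
    μ (X ⁻¹' s) = ∫⁻ ω, κ ω s ∂μ := by
  have hint : Integrable (fun ω => (κ ω s).toReal) μ := integrable_condExp.congr h
  calc μ (X ⁻¹' s) = ENNReal.ofReal (∫ ω, s.indicator (fun _ => (1 : ℝ)) (X ω) ∂μ) := by
        rw [show (fun ω => s.indicator (fun _ => (1 : ℝ)) (X ω)) = (X ⁻¹' s).indicator 1 from rfl,
          integral_indicator_one (hX hs), ofReal_measureReal]
    _ = ENNReal.ofReal (∫ ω, (κ ω s).toReal ∂μ) := by
        rw [← integral_condExp hm, integral_congr_ae h]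
    _ = ∫⁻ ω, κ ω s ∂μ := by
        rw [ofReal_integral_eq_lintegral_ofReal hint (ae_of_all _ fun _ => ENNReal.toReal_nonneg)]
        exact lintegral_congr fun ω => ENNReal.ofReal_toReal (hκ ω)

/-- No measurability of `ω ↦ κ ω` is assumed, which is why only an inequality is available. -/
lemma lintegral_comp_le_lintegral_lintegral {X : Ω → α} (hX : Measurable X)
    (hlaw : ∀ s, MeasurableSet s → μ (X ⁻¹' s) = ∫⁻ ω, κ ω s ∂μ)
    {f : α → ℝ≥0∞} (hf : Measurable f) :
    ∫⁻ ω, f (X ω) ∂μ ≤ ∫⁻ ω, ∫⁻ x, f x ∂κ ω ∂μ := by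
  rw [← lintegral_map hf hX]
  refine Measurable.ennreal_induction (motive := fun f =>
    ∫⁻ x, f x ∂μ.map X ≤ ∫⁻ ω, ∫⁻ x, f x ∂κ ω ∂μ) ?indicator ?add ?iSup hf
  case indicator =>
    intro c s hs
    calc ∫⁻ x, s.indicator (fun _ => c) x ∂μ.map X = c * ∫⁻ ω, κ ω s ∂μ := by
          rw [lintegral_indicator_const hs, Measure.map_apply hX hs, hlaw s hs]
      _ ≤ ∫⁻ ω, c * κ ω s ∂μ := lintegral_const_mul_le _ _
      _ = ∫⁻ ω, ∫⁻ x, s.indicator (fun _ => c) x ∂κ ω ∂μ := by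
          simp only [lintegral_indicator_const hs]
  case add =>
    intro f g _ hf _ hfle hgle
    calc ∫⁻ x, (f + g) x ∂μ.map X = ∫⁻ x, f x ∂μ.map X + ∫⁻ x, g x ∂μ.map X :=
          lintegral_add_left hf _
      _ ≤ ∫⁻ ω, (∫⁻ x, f x ∂κ ω) + ∫⁻ x, g x ∂κ ω ∂μ :=
          (add_le_add hfle hgle).trans (le_lintegral_add _ _)
      _ = ∫⁻ ω, ∫⁻ x, (f + g) x ∂κ ω ∂μ := by
          simp only [Pi.add_apply, lintegral_add_left hf]
  case iSup =>
    intro f hf hmono hfle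
    calc ∫⁻ x, ⨆ n, f n x ∂μ.map X = ⨆ n, ∫⁻ x, f n x ∂μ.map X := lintegral_iSup hf hmono
      _ ≤ ⨆ n, ∫⁻ ω, ∫⁻ x, f n x ∂κ ω ∂μ := iSup_mono hfle
      _ ≤ ∫⁻ ω, ⨆ n, ∫⁻ x, f n x ∂κ ω ∂μ := iSup_lintegral_le _
      _ = ∫⁻ ω, ∫⁻ x, ⨆ n, f n x ∂κ ω ∂μ := by
          simp only [lintegral_iSup hf hmono]

end ConditionalLaw

lemma ENNReal.le_add_div_of_le_mul_add {u : ℕ → ℝ≥0∞} {a c : ℝ≥0∞} (ha : a < 1)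
    (h : ∀ n, u (n + 1) ≤ a * u n + c) (n : ℕ) : u n ≤ u 0 + c / (1 - a) := by
  have hfix : a * (c / (1 - a)) + c = c / (1 - a) := by
    have hc : (1 - a) * (c / (1 - a)) = c :=
      ENNReal.mul_div_cancel (tsub_pos_of_lt ha).ne' (ENNReal.sub_ne_top ENNReal.one_ne_top)
    calc a * (c / (1 - a)) + c = (a + (1 - a)) * (c / (1 - a)) := by rw [add_mul, hc]
      _ = c / (1 - a) := by rw [add_tsub_cancel_of_le ha.le, one_mul]
  induction n with
  | zero => exact le_self_add
  | succ n ih =>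
    calc u (n + 1) ≤ a * (u 0 + c / (1 - a)) + c := (h n).trans (by gcongr)
      _ = a * u 0 + (a * (c / (1 - a)) + c) := by ring
      _ ≤ u 0 + c / (1 - a) := by
          rw [hfix]
          gcongr
          exact mul_le_of_le_one_left' ha.le

section Moments

variable {Ω α : Type*} {m0 : MeasurableSpace Ω} [MeasurableSpace α] {μ : Measure Ω}

lemma lintegral_comp_le_of_drift [IsProbabilityMeasure μ] {X : ℕ → Ω → α}
    (hX : ∀ n, Measurable (X n)) {κ : ℕ → Ω → Measure α}
    (hlaw : ∀ n s, MeasurableSet s → μ (X (n + 1) ⁻¹' s) = ∫⁻ ω, κ n ω s ∂μ)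
    {V : α → ℝ≥0∞} (hV : Measurable V) {a c : ℝ≥0∞} (ha : a < 1)
    (hdrift : ∀ n ω, ∫⁻ x, V x ∂κ n ω ≤ a * V (X n ω) + c) (n : ℕ) :
    ∫⁻ ω, V (X n ω) ∂μ ≤ ∫⁻ ω, V (X 0 ω) ∂μ + c / (1 - a) := by
  refine ENNReal.le_add_div_of_le_mul_add (u := fun n => ∫⁻ ω, V (X n ω) ∂μ) ha
    (fun n => ?_) n
  calc ∫⁻ ω, V (X (n + 1) ω) ∂μ ≤ ∫⁻ ω, ∫⁻ x, V x ∂κ n ω ∂μ :=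
        lintegral_comp_le_lintegral_lintegral (hX (n + 1)) (hlaw n) hV
    _ ≤ ∫⁻ ω, a * V (X n ω) + c ∂μ := lintegral_mono (hdrift n)
    _ = a * ∫⁻ ω, V (X n ω) ∂μ + c := by
        have hVX : Measurable fun ω => V (X n ω) := hV.comp (hX n)
        rw [lintegral_add_right _ measurable_const, lintegral_const_mul _ hVX, lintegral_const,
          measure_univ, mul_one]

lemma exists_lintegral_sq_le_of_drift [IsProbabilityMeasure μ] {X : ℕ → Ω → α}
    (hX : ∀ n, Measurable (X n)) {κ : ℕ → Ω → Measure α}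
    (hlaw : ∀ n s, MeasurableSet s → μ (X (n + 1) ⁻¹' s) = ∫⁻ ω, κ n ω s ∂μ)
    {W : α → ℝ} (hW : Measurable W) (hW1 : ∀ x, 1 ≤ W x) {p lam b : ℝ} (hp : 2 ≤ p)
    (hlam : lam < 1)
    (hdrift : ∀ n ω, ∫⁻ x, ENNReal.ofReal (W x ^ p) ∂κ n ω
      ≤ ENNReal.ofReal (lam * W (X n ω) ^ p + b))
    (hX0 : ∫⁻ ω, ENNReal.ofReal (W (X 0 ω) ^ p) ∂μ < ∞) :
    ∃ M ≠ ∞, ∀ n, ∫⁻ ω, ENNReal.ofReal (W (X n ω) ^ 2) ∂μ ≤ M := by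
  have hlam' : ENNReal.ofReal lam < 1 := ENNReal.ofReal_lt_one.2 hlam
  refine ⟨∫⁻ ω, ENNReal.ofReal (W (X 0 ω) ^ p) ∂μ + ENNReal.ofReal b / (1 - ENNReal.ofReal lam),
    ENNReal.add_ne_top.2 ⟨hX0.ne, ENNReal.div_ne_top ENNReal.ofReal_ne_top
      (tsub_pos_of_lt hlam').ne'⟩, fun n => ?_⟩
  have hsq x : W x ^ 2 ≤ W x ^ p := by
    rw [← Real.rpow_two]
    exact Real.rpow_le_rpow_of_exponent_le (hW1 x) hp
  have hdrift' n ω : ∫⁻ x, ENNReal.ofReal (W x ^ p) ∂κ n ω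
      ≤ ENNReal.ofReal lam * ENNReal.ofReal (W (X n ω) ^ p) + ENNReal.ofReal b := by
    refine (hdrift n ω).trans (ENNReal.ofReal_add_le.trans_eq ?_)
    rw [ENNReal.ofReal_mul' (Real.rpow_nonneg (zero_le_one.trans (hW1 _)) p)]
  exact (lintegral_mono fun ω => ENNReal.ofReal_le_ofReal (hsq _)).trans <|
    lintegral_comp_le_of_drift hX hlaw (hW.pow_const p).ennreal_ofReal hlam' hdrift' n

lemma lintegral_tsum_ofReal_mul_lt_top {a : ℕ → ℝ} (ha0 : ∀ k, 0 ≤ a k) (ha : Summable a)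
    {X : ℕ → Ω → ℝ} (hX : ∀ k, AEMeasurable (X k) μ) {M : ℝ≥0∞} (hM : M ≠ ∞)
    (hXM : ∀ k, ∫⁻ ω, ENNReal.ofReal (X k ω) ∂μ ≤ M) :
    ∫⁻ ω, ∑' k, ENNReal.ofReal (a k * X k ω) ∂μ < ∞ := by
  simp only [ENNReal.ofReal_mul (ha0 _)]
  rw [lintegral_tsum fun k => (hX k).ennreal_ofReal.const_mul _]
  calc ∑' k, ∫⁻ ω, ENNReal.ofReal (a k) * ENNReal.ofReal (X k ω) ∂μ
        ≤ ∑' k, ENNReal.ofReal (a k) * M := ENNReal.tsum_le_tsum fun k => by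
          rw [lintegral_const_mul'' _ (hX k).ennreal_ofReal]
          exact mul_le_mul_right (hXM k) _
    _ < ∞ := by
        rw [ENNReal.tsum_mul_right, ← ENNReal.ofReal_tsum_of_nonneg ha0 ha]
        exact ENNReal.mul_lt_top ENNReal.ofReal_lt_top hM.lt_top

lemma lintegral_tsum_ofReal_lt_top_and_ae_summable_of_le {f g : ℕ → Ω → ℝ}
    (hf : ∀ k ω, 0 ≤ f k ω) (hfg : ∀ k ω, f k ω ≤ g k ω) (hg : ∀ k, AEMeasurable (g k) μ)
    (hglt : ∫⁻ ω, ∑' k, ENNReal.ofReal (g k ω) ∂μ < ∞) :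
    ∫⁻ ω, ∑' k, ENNReal.ofReal (f k ω) ∂μ < ∞ ∧ ∀ᵐ ω ∂μ, Summable fun k => f k ω := by
  refine ⟨lt_of_le_of_lt (lintegral_mono fun ω => ENNReal.tsum_le_tsum fun k =>
    ENNReal.ofReal_le_ofReal (hfg k ω)) hglt, ?_⟩
  filter_upwards [ae_lt_top' (AEMeasurable.tsum fun k => (hg k).ennreal_ofReal) hglt.ne]
    with ω hω
  have hg0 k : 0 ≤ g k ω := (hf k ω).trans (hfg k ω)
  have hgsum : Summable fun k => g k ω :=
    (ENNReal.summable_toReal hω.ne).congr fun k => ENNReal.toReal_ofReal (hg0 k)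
  exact hgsum.of_nonneg_of_le (hf · ω) (hfg · ω)

end Moments

lemma mul_abs_inner_le_of_step {E : Type*} [NormedAddCommGroup E] [InnerProductSpace ℝ E]
    {T : E →L[ℝ] E} {θ θ' h u R : E} {γ μM C₀ B CP w : ℝ} (hγ : 0 ≤ γ) (hCP : 0 ≤ CP)
    (hw : 0 ≤ w) (hT : ‖T‖ ≤ μM) (hh : ‖h‖ ≤ C₀) (hu : ‖u‖ ≤ B * w)
    (hstep : θ' = θ - γ • T u) (hR : ‖R‖ ≤ CP * ‖θ' - θ‖ * w) :
    γ * |⟪h, T R⟫| ≤ γ ^ 2 * (C₀ * μM ^ 2 * CP * B) * w ^ 2 := by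
  have hμM : 0 ≤ μM := (norm_nonneg T).trans hT
  have hC₀ : 0 ≤ C₀ := (norm_nonneg h).trans hh
  have hTu : ‖T u‖ ≤ μM * (B * w) :=
    (T.le_opNorm u).trans (mul_le_mul hT hu (norm_nonneg u) hμM)
  have hΔ : ‖θ' - θ‖ ≤ γ * (μM * (B * w)) := by
    rw [hstep, sub_sub_cancel_left, norm_neg, norm_smul, Real.norm_of_nonneg hγ]
    gcongr
  have hTR : ‖T R‖ ≤ μM * (CP * (γ * (μM * (B * w))) * w) :=
    (T.le_opNorm R).trans (mul_le_mul hT (hR.trans (by gcongr)) (norm_nonneg R) hμM)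
  calc γ * |⟪h, T R⟫| ≤ γ * (C₀ * (μM * (CP * (γ * (μM * (B * w))) * w))) := by
        gcongr
        exact (abs_real_inner_le_norm _ _).trans (mul_le_mul hh hTR (norm_nonneg _) hC₀)
    _ = γ ^ 2 * (C₀ * μM ^ 2 * CP * B) * w ^ 2 := by ring

theorem remainder_prime_series_converges_general
    {d : ℕ}
    {𝒵 : Type*} [MeasurableSpace 𝒵]
    (Θ : Set (EuclideanSpace ℝ (Fin d)))
    (K : EuclideanSpace ℝ (Fin d) → Kernel 𝒵 𝒵)
    (hK : ∀ θ ∈ Θ, IsMarkovKernel (K θ))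
    (H : EuclideanSpace ℝ (Fin d) → 𝒵 → EuclideanSpace ℝ (Fin d))
    (hbar : EuclideanSpace ℝ (Fin d) → EuclideanSpace ℝ (Fin d))
    (W : 𝒵 → ℝ) (hWmeas : Measurable W) (hW1 : ∀ z, 1 ≤ W z)
    (p lam b : ℝ) (hp : 2 ≤ p) (hlam1 : lam < 1)
    -- `sup_θ |H_θ|_W < ∞`
    (hHbound : ∃ B : ℝ, ∀ θ ∈ Θ, ∀ z, ‖H θ z‖ ≤ B * W z)
    -- drift condition
    (hdrift : ∀ θ ∈ Θ, ∀ z,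
      ∫⁻ z', ENNReal.ofReal (W z' ^ p) ∂(K θ z)
        ≤ ENNReal.ofReal (lam * W z ^ p + b))
    -- the preconditioner `P` : symmetric positive definite, eigenvalues in `[μm, μM]`
    (P : EuclideanSpace ℝ (Fin d) → (EuclideanSpace ℝ (Fin d) →L[ℝ] EuclideanSpace ℝ (Fin d)))
    (μm μM : ℝ) (hμm : 0 < μm) (hμmM : μm ≤ μM)
    (hPsa : ∀ θ ∈ Θ, IsSelfAdjoint (P θ))
    (hPlb : ∀ θ ∈ Θ, ∀ v : EuclideanSpace ℝ (Fin d), μm * ‖v‖ ^ 2 ≤ ⟪v, P θ v⟫)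
    (hPub : ∀ θ ∈ Θ, ∀ v : EuclideanSpace ℝ (Fin d), ⟪v, P θ v⟫ ≤ μM * ‖v‖ ^ 2)
    -- step sizes
    (γ : ℕ → ℝ) (hγ0 : ∀ k, 0 ≤ γ k)
    (hγsq : Summable fun k => γ k ^ 2)
    -- the algorithm
    {Ω : Type*} {m0 : MeasurableSpace Ω} {μ : Measure Ω} [IsProbabilityMeasure μ]
    (𝔉 : Filtration ℕ m0)
    (Z : ℕ → Ω → 𝒵) (hZmeas : ∀ k, Measurable[𝔉 k] (Z k))
    (θ : ℕ → Ω → EuclideanSpace ℝ (Fin d))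
    (hθΘ : ∀ k ω, θ k ω ∈ Θ)
    (hZ0 : ∫⁻ ω, ENNReal.ofReal (W (Z 0 ω) ^ p) ∂μ < ⊤)
    -- the conditional law of `Z^{k+1}` given `𝔉_k` is `Π_{θ_k}(Z^k, ·)`
    (hcond : ∀ k, ∀ A : Set 𝒵, MeasurableSet A →
      (μ[fun ω => A.indicator (fun _ => (1:ℝ)) (Z (k + 1) ω) | 𝔉 k])
        =ᵐ[μ] fun ω => ((K (θ k ω)) (Z k ω) A).toReal)
    (hrec : ∀ k ω, θ (k + 1) ω = θ k ω - γ k • P (θ k ω) (H (θ k ω) (Z (k + 1) ω)))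
    -- the solution `Ĥ` of the Poisson equation
    (Hhat : EuclideanSpace ℝ (Fin d) → 𝒵 → EuclideanSpace ℝ (Fin d))
    -- `h̄` is bounded on `Θ`
    (C₀ : ℝ) (hC₀ : 0 < C₀) (hbarbound : ∀ θ' ∈ Θ, ‖hbar θ'‖ ≤ C₀)
    -- Lipschitz regularity of `Π Ĥ`
    (CP : ℝ) (hCP : 0 < CP)
    (hPihatlip : ∀ θ' ∈ Θ, ∀ θ'' ∈ Θ, ∀ z,
      ‖(∫ z', Hhat θ' z' ∂(K θ' z)) - ∫ z', Hhat θ'' z' ∂(K θ'' z)‖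
        ≤ CP * ‖θ' - θ''‖ * W z) :
    (∫⁻ ω, (∑' k : ℕ, ENNReal.ofReal
        (γ k * |⟪hbar (θ k ω),
          P (θ k ω) ((∫ z', Hhat (θ (k + 1) ω) z' ∂(K (θ (k + 1) ω) (Z (k + 1) ω)))
            - ∫ z', Hhat (θ k ω) z' ∂(K (θ k ω) (Z (k + 1) ω)))⟫|)) ∂μ) < ⊤ ∧
      ∀ᵐ ω ∂μ, Summable fun k : ℕ =>
        γ k * |⟪hbar (θ k ω),
          P (θ k ω) ((∫ z', Hhat (θ (k + 1) ω) z' ∂(K (θ (k + 1) ω) (Z (k + 1) ω)))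
            - ∫ z', Hhat (θ k ω) z' ∂(K (θ k ω) (Z (k + 1) ω)))⟫| := by
  have hZm n : Measurable (Z n) := (hZmeas n).mono (𝔉.le n) le_rfl
  have hlaw n s (hs : MeasurableSet s) :
      μ (Z (n + 1) ⁻¹' s) = ∫⁻ ω, K (θ n ω) (Z n ω) s ∂μ :=
    measure_preimage_eq_lintegral_of_condExp_indicator (𝔉.le n) (hZm _) hs
      (fun ω => have := hK _ (hθΘ n ω); measure_ne_top _ _) (hcond n s hs)
  obtain ⟨M, hM, hmoment⟩ := exists_lintegral_sq_le_of_drift hZm hlaw hWmeas hW1 hp hlam1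
    (fun n ω => hdrift _ (hθΘ n ω) _) hZ0
  have hμM : 0 ≤ μM := hμm.le.trans hμmM
  have hP θ' (hθ' : θ' ∈ Θ) : ‖P θ'‖ ≤ μM :=
    (P θ').norm_le_of_inner_self_le (hPsa θ' hθ') hμM
      (fun v => (by positivity : 0 ≤ μm * ‖v‖ ^ 2).trans (hPlb θ' hθ' v)) (hPub θ' hθ')
  obtain ⟨B, hB⟩ := hHbound
  have hW0 z : 0 ≤ W z := zero_le_one.trans (hW1 z)
  have hB' θ' (hθ' : θ' ∈ Θ) z : ‖H θ' z‖ ≤ |B| * W z :=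
    (hB θ' hθ' z).trans (mul_le_mul_of_nonneg_right (le_abs_self B) (hW0 z))
  have hWsq k : Measurable fun ω => W (Z (k + 1) ω) ^ 2 :=
    (hWmeas.comp (hZm (k + 1))).pow_const 2
  refine lintegral_tsum_ofReal_lt_top_and_ae_summable_of_le
    (g := fun k ω => γ k ^ 2 * (C₀ * μM ^ 2 * CP * |B|) * W (Z (k + 1) ω) ^ 2)
    (fun k ω => mul_nonneg (hγ0 k) (abs_nonneg _))
    (fun k ω => mul_abs_inner_le_of_step (hγ0 k) hCP.le (hW0 _) (hP _ (hθΘ k ω))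
      (hbarbound _ (hθΘ k ω)) (hB' _ (hθΘ k ω) _) (hrec k ω)
      (hPihatlip _ (hθΘ (k + 1) ω) _ (hθΘ k ω) _))
    (fun k => ((hWsq k).const_mul _).aemeasurable) ?_
  have hC : 0 ≤ C₀ * μM ^ 2 * CP * |B| := by positivity
  exact lintegral_tsum_ofReal_mul_lt_top (fun k => by positivity) (hγsq.mul_right _)
    (fun k => (hWsq k).aemeasurable) hM (fun k => hmoment (k + 1))

/-- Control of the `R'_k` part in the proof of Lemma 3:
`𝔼[∑_k γ_k |⟨h̄(θ_k), P(θ_k) R'_k⟩|] < ∞` with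
`R'_k = (Π_{θ_{k+1}}Ĥ_{θ_{k+1}})(Z^{k+1}) − (Π_{θ_k}Ĥ_{θ_k})(Z^{k+1})`; in particular the
series `∑_k γ_k ⟨h̄(θ_k), P(θ_k) R'_k⟩` converges absolutely almost surely. -/
theorem remainder_prime_series_converges
    {d : ℕ} (hd : 1 ≤ d)
    {𝒵 : Type*} [MeasurableSpace 𝒵]
    (Θ : Set (EuclideanSpace ℝ (Fin d))) (hΘ : Bornology.IsBounded Θ)
    (K : EuclideanSpace ℝ (Fin d) → Kernel 𝒵 𝒵)
    (hK : ∀ θ ∈ Θ, IsMarkovKernel (K θ))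
    (π : EuclideanSpace ℝ (Fin d) → Measure 𝒵)
    (hπ : ∀ θ ∈ Θ, IsProbabilityMeasure (π θ))
    (hinv : ∀ θ ∈ Θ, (π θ).bind (K θ) = π θ)
    (H : EuclideanSpace ℝ (Fin d) → 𝒵 → EuclideanSpace ℝ (Fin d))
    (hHmeas : Measurable (Function.uncurry H))
    -- `h̄(θ) = ∫ H_θ dπ_θ`
    (hbar : EuclideanSpace ℝ (Fin d) → EuclideanSpace ℝ (Fin d))
    (hhbar : ∀ θ, hbar θ = ∫ z, H θ z ∂(π θ))
    (W : 𝒵 → ℝ) (hWmeas : Measurable W) (hW1 : ∀ z, 1 ≤ W z)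
    (p lam b : ℝ) (hp : 2 ≤ p) (hlam0 : 0 < lam) (hlam1 : lam < 1) (hb : 0 < b)
    -- `sup_θ |H_θ|_W < ∞`
    (hHbound : ∃ B : ℝ, ∀ θ ∈ Θ, ∀ z, ‖H θ z‖ ≤ B * W z)
    -- drift condition
    (hdrift : ∀ θ ∈ Θ, ∀ z,
      ∫⁻ z', ENNReal.ofReal (W z' ^ p) ∂(K θ z)
        ≤ ENNReal.ofReal (lam * W z ^ p + b))
    -- the preconditioner `P` : symmetric positive definite, eigenvalues in `[μm, μM]`
    (P : EuclideanSpace ℝ (Fin d) → (EuclideanSpace ℝ (Fin d) →L[ℝ] EuclideanSpace ℝ (Fin d)))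
    (μm μM : ℝ) (hμm : 0 < μm) (hμmM : μm ≤ μM)
    (hPsa : ∀ θ ∈ Θ, IsSelfAdjoint (P θ))
    (hPlb : ∀ θ ∈ Θ, ∀ v : EuclideanSpace ℝ (Fin d), μm * ‖v‖ ^ 2 ≤ ⟪v, P θ v⟫)
    (hPub : ∀ θ ∈ Θ, ∀ v : EuclideanSpace ℝ (Fin d), ⟪v, P θ v⟫ ≤ μM * ‖v‖ ^ 2)
    -- step sizes
    (γ : ℕ → ℝ) (hγ0 : ∀ k, 0 ≤ γ k) (hγ1 : ∀ k, γ k ≤ 1)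
    (hγsq : Summable fun k => γ k ^ 2)
    -- the algorithm
    {Ω : Type*} {m0 : MeasurableSpace Ω} {μ : Measure Ω} [IsProbabilityMeasure μ]
    (𝔉 : Filtration ℕ m0)
    (Z : ℕ → Ω → 𝒵) (hZmeas : ∀ k, Measurable[𝔉 k] (Z k))
    (θ : ℕ → Ω → EuclideanSpace ℝ (Fin d))
    (hθmeas : ∀ k, Measurable[𝔉 k] (θ k))
    (hθΘ : ∀ k ω, θ k ω ∈ Θ)
    (θ₀ : EuclideanSpace ℝ (Fin d)) (hθ0 : ∀ ω, θ 0 ω = θ₀)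
    (hZ0 : ∫⁻ ω, ENNReal.ofReal (W (Z 0 ω) ^ p) ∂μ < ⊤)
    -- the conditional law of `Z^{k+1}` given `𝔉_k` is `Π_{θ_k}(Z^k, ·)`
    (hcond : ∀ k, ∀ A : Set 𝒵, MeasurableSet A →
      (μ[fun ω => A.indicator (fun _ => (1:ℝ)) (Z (k + 1) ω) | 𝔉 k])
        =ᵐ[μ] fun ω => ((K (θ k ω)) (Z k ω) A).toReal)
    (hrec : ∀ k ω, θ (k + 1) ω = θ k ω - γ k • P (θ k ω) (H (θ k ω) (Z (k + 1) ω)))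
    -- the solution `Ĥ` of the Poisson equation
    (Hhat : EuclideanSpace ℝ (Fin d) → 𝒵 → EuclideanSpace ℝ (Fin d))
    (hHhatmeas : Measurable (Function.uncurry Hhat))
    (hHhatbound : ∃ B : ℝ, ∀ θ' ∈ Θ, ∀ z, ‖Hhat θ' z‖ ≤ B * W z)
    (hpoisson : ∀ θ' ∈ Θ, ∀ z,
      Hhat θ' z - (∫ z', Hhat θ' z' ∂(K θ' z)) = H θ' z - hbar θ')
    -- `h̄` is bounded on `Θ`
    (C₀ : ℝ) (hC₀ : 0 < C₀) (hbarbound : ∀ θ' ∈ Θ, ‖hbar θ'‖ ≤ C₀)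
    -- Lipschitz regularity of `Π Ĥ`
    (CP : ℝ) (hCP : 0 < CP)
    (hPihatlip : ∀ θ' ∈ Θ, ∀ θ'' ∈ Θ, ∀ z,
      ‖(∫ z', Hhat θ' z' ∂(K θ' z)) - ∫ z', Hhat θ'' z' ∂(K θ'' z)‖
        ≤ CP * ‖θ' - θ''‖ * W z) :
    (∫⁻ ω, (∑' k : ℕ, ENNReal.ofReal
        (γ k * |⟪hbar (θ k ω),
          P (θ k ω) ((∫ z', Hhat (θ (k + 1) ω) z' ∂(K (θ (k + 1) ω) (Z (k + 1) ω)))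
            - ∫ z', Hhat (θ k ω) z' ∂(K (θ k ω) (Z (k + 1) ω)))⟫|)) ∂μ) < ⊤ ∧
      ∀ᵐ ω ∂μ, Summable fun k : ℕ =>
        γ k * |⟪hbar (θ k ω),
          P (θ k ω) ((∫ z', Hhat (θ (k + 1) ω) z' ∂(K (θ (k + 1) ω) (Z (k + 1) ω)))
            - ∫ z', Hhat (θ k ω) z' ∂(K (θ k ω) (Z (k + 1) ω)))⟫| :=
  remainder_prime_series_converges_general Θ K hK H hbar W hWmeas hW1 p lam b hp hlam1 hHbound
    hdrift P μm μM hμm hμmM hPsa hPlb hPub γ hγ0 hγsq 𝔉 Z hZmeas θ hθΘ hZ0 hcond hrec Hhat C₀ hC₀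
    hbarbound CP hCP hPihatlip
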